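/- Let S be a set of partial recursive codes (indices of partial computable functions on ℕ) that is recursively enumerable, and suppose every code c in S is total, i.e. c.eval(n) is defined for every natural number n. Then there exists a computable (total) function g : ℕ → ℕ such that for every code c in S there is a natural number n with c.eval(n) ≠ g(n) (in particular g is not the function computed by any code in S). -/

import Mathlib

/-!
An r.e. set of total codes can be listed by a computable sequence `f` of codes (if it is empty,
any function escapes it). The diagonal function `n ↦ (f n).eval n + 1` is then total and
computable, and it differs from the `i`-th listed function at `i`.
-/

open Nat.Partrec (Code)
open Nat.Partrec.Code Encodable

theorem REPred.exists_computable_stage {α : Type*} [Primcodable α] {p : α → Prop}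
    (hp : REPred p) :
    ∃ q : α → ℕ → Bool, Computable₂ q ∧ ∀ a, p a ↔ ∃ t, q a t = true := by
  obtain ⟨e, he⟩ := exists_code.1 hp
  refine ⟨fun a t => (evaln t e (encode a)).isSome, ?_, fun a => ?_⟩
  · exact Primrec.option_isSome.to_comp.comp <| primrec_evaln.to_comp.comp <|
      (Computable.snd.pair (Computable.const e)).pair (Computable.encode.comp Computable.fst)
  · have hdom : p a ↔ (e.eval (encode a)).Dom := by
      simp [he, encodek, Part.assert]
    simp only [hdom, Part.dom_iff_mem, evaln_complete, Option.isSome_iff_exists]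
    exact ⟨fun ⟨x, t, ht⟩ => ⟨t, x, ht⟩, fun ⟨t, x, ht⟩ => ⟨x, t, ht⟩⟩

/-- Dovetailing: `n = ⟪a, t⟫` lists `a` once it is seen to satisfy `p` at stage `t`, and the
fixed element `a₀` otherwise. -/
theorem REPred.exists_computable_range_eq {α : Type*} [Primcodable α] {p : α → Prop}
    (hp : REPred p) {a₀ : α} (ha₀ : p a₀) :
    ∃ f : ℕ → α, Computable f ∧ Set.range f = {a | p a} := by
  obtain ⟨q, hq, hpq⟩ := hp.exists_computable_stage
  set f : ℕ → α := fun n =>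
    ((decode (α := α) n.unpair.1).bind fun a => bif q a n.unpair.2 then some a else none).getD a₀
  have hf : Computable f :=
    (Computable.option_bind (Computable.decode.comp (Computable.fst.comp Computable.unpair))
      (Computable.cond (hq.comp Computable.snd (Computable.snd.comp
        (Computable.unpair.comp Computable.fst)))
        (Computable.option_some.comp Computable.snd) (Computable.const none)).to₂).option_getD
      (Computable.const a₀)
  have hf_mem (n : ℕ) : p (f n) := by
    cases ha : decode (α := α) n.unpair.1 with
    | none => simpa [f, ha] using ha₀
    | some a =>
      cases ht : q a n.unpair.2
      · simpa [f, ha, ht] using ha₀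
      · simpa [f, ha, ht] using (hpq a).2 ⟨_, ht⟩
  refine ⟨f, hf, Set.Subset.antisymm (Set.range_subset_iff.2 hf_mem) fun a ha => ?_⟩
  obtain ⟨t, ht⟩ := (hpq a).1 ha
  exact ⟨Nat.pair (encode a) t, by simp [f, encodek, ht]⟩

theorem exists_computable_ne_eval_diag {f : ℕ → Code} (hf : Computable f)
    (htot : ∀ i n, ((f i).eval n).Dom) :
    ∃ g : ℕ → ℕ, Computable g ∧ ∀ i, (f i).eval i ≠ Part.some (g i) := by
  have hdiag : Partrec fun n => ((f n).eval n).map Nat.succ :=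
    (eval_part.comp hf Computable.id).map (Computable.succ.comp Computable.snd).to₂
  refine ⟨fun n => ((f n).eval n).get (htot n n) + 1,
    hdiag.of_eq_tot fun n => Part.mem_map _ (Part.get_mem _), fun i h => ?_⟩
  have hget := Part.get_eq_of_mem (Part.eq_some_iff.1 h) (htot i i)
  dsimp only at hget
  omega

theorem computable_function_escaping_re_set_of_total_codes
    (S : Set Nat.Partrec.Code) (hS : REPred (· ∈ S))
    (htot : ∀ c ∈ S, ∀ n : ℕ, (c.eval n).Dom) :
    ∃ g : ℕ → ℕ, Computable g ∧
      ∀ c ∈ S, ∃ n : ℕ, c.eval n ≠ Part.some (g n) := by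
  rcases S.eq_empty_or_nonempty with rfl | ⟨c₀, hc₀⟩
  · exact ⟨fun _ => 0, Computable.const 0, by simp⟩
  obtain ⟨f, hf, hrange⟩ := hS.exists_computable_range_eq hc₀
  have hf_mem (i : ℕ) : f i ∈ S := hrange.subset ⟨i, rfl⟩
  obtain ⟨g, hg, hne⟩ := exists_computable_ne_eval_diag hf fun i => htot _ (hf_mem i)
  refine ⟨g, hg, fun c hc => ?_⟩
  obtain ⟨i, rfl⟩ : c ∈ Set.range f := hrange.superset hc
  exact ⟨i, hne i⟩
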